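/- Let G be an HRLQ instance, and suppose M1 is a matching of G that is stable in the instance G1 and satisfies |M1(h)| = q⁻(h) for every hospital h. Let M2 be a stable matching of the instance G' defined from M1. Then M = M1 ∪ M2 is an envy-free matching of G. -/

import Mathlib

open scoped Classical

/-- An HRLQ instance on residents `R` and hospitals `H`: an edge set (acceptability
relation), strict preference relations of residents over hospitals and of hospitals
over residents (strict, transitive, total over neighbors), and lower/upper quotas. -/
structure HRLQ (R H : Type) where
  E : Finset (R × H)
  /-- `rp r h h'` : resident `r` strictly prefers hospital `h` over `h'`. -/
  rp : R → H → H → Prop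
  /-- `hp h r r'` : hospital `h` strictly prefers resident `r` over `r'`. -/
  hp : H → R → R → Prop
  lq : H → ℕ
  uq : H → ℕ
  lq_le_uq : ∀ h, lq h ≤ uq h
  uq_pos : ∀ h, 1 ≤ uq h
  rp_irrefl : ∀ r h, ¬ rp r h h
  rp_trans : ∀ r h₁ h₂ h₃, rp r h₁ h₂ → rp r h₂ h₃ → rp r h₁ h₃
  rp_total : ∀ r h₁ h₂, (r, h₁) ∈ E → (r, h₂) ∈ E → h₁ ≠ h₂ → rp r h₁ h₂ ∨ rp r h₂ h₁
  hp_irrefl : ∀ h r, ¬ hp h r r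
  hp_trans : ∀ h r₁ r₂ r₃, hp h r₁ r₂ → hp h r₂ r₃ → hp h r₁ r₃
  hp_total : ∀ h r₁ r₂, (r₁, h) ∈ E → (r₂, h) ∈ E → r₁ ≠ r₂ → hp h r₁ r₂ ∨ hp h r₂ r₁

namespace HRLQ

variable {R H : Type} [Fintype R] [Fintype H] [DecidableEq R] [DecidableEq H]

/-- `M(h)`: the set of residents assigned to hospital `h` by `M`.
A matching is represented as a function `M : R → Option H` assigning to each resident
at most one hospital (`none` = unmatched). -/
noncomputable def assigned (M : R → Option H) (h : H) : Finset R :=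
  Finset.univ.filter fun r => M r = some h

/-- `M` is a matching with respect to edge set `E` and upper quotas `q`:
every matched pair is an edge and no hospital exceeds its upper quota.
(Each resident is matched to at most one hospital by the functional representation.) -/
def IsMatchingIn (E : Finset (R × H)) (q : H → ℕ) (M : R → Option H) : Prop :=
  (∀ r h, M r = some h → (r, h) ∈ E) ∧ ∀ h, (assigned M h).card ≤ q h

/-- `M` is a matching of the instance `G`. -/
def IsMatching (G : HRLQ R H) (M : R → Option H) : Prop :=
  IsMatchingIn G.E G.uq M

/-- `M` is a feasible matching of `G`: a matching meeting all lower quotas. -/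
def Feasible (G : HRLQ R H) (M : R → Option H) : Prop :=
  IsMatching G M ∧ ∀ h, G.lq h ≤ (assigned M h).card

/-- Resident `r` is unmatched in `M` or prefers `h` over `M(r)`. -/
def WantsMore (G : HRLQ R H) (M : R → Option H) (r : R) (h : H) : Prop :=
  ∀ h', M r = some h' → G.rp r h h'

/-- The pair `(r,h)` blocks `M`, with respect to edge set `E` and upper quotas `q`. -/
def BlocksIn (G : HRLQ R H) (E : Finset (R × H)) (q : H → ℕ)
    (M : R → Option H) (r : R) (h : H) : Prop :=
  (r, h) ∈ E ∧ M r ≠ some h ∧ WantsMore G M r h ∧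
    ((assigned M h).card < q h ∨ ∃ r' ∈ assigned M h, G.hp h r r')

/-- The pair `(r,h)` blocks `M` in the instance `G`. -/
def Blocks (G : HRLQ R H) (M : R → Option H) (r : R) (h : H) : Prop :=
  BlocksIn G G.E G.uq M r h

/-- `M` is stable in `G`: no blocking pair. -/
def Stable (G : HRLQ R H) (M : R → Option H) : Prop :=
  ∀ r h, ¬ Blocks G M r h

/-- Resident `r` has justified envy toward `r'` (matched to some hospital `h`) w.r.t. `M`. -/
def JustifiedEnvy (G : HRLQ R H) (M : R → Option H) (r r' : R) : Prop :=
  ∃ h, M r' = some h ∧ (r, h) ∈ G.E ∧ G.hp h r r' ∧ WantsMore G M r h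

/-- `M` is envy-free: no resident has justified envy toward another. -/
def EnvyFree (G : HRLQ R H) (M : R → Option H) : Prop :=
  ∀ r r', ¬ JustifiedEnvy G M r r'

/-- `M` is a maximal envy-free matching of `G`: it is envy-free, and for every edge
`(r,h) ∈ E \ M`, `M ∪ {(r,h)}` is not an envy-free matching (either it is not a valid
matching, or it is not envy-free). -/
def MaximalEnvyFree (G : HRLQ R H) (M : R → Option H) : Prop :=
  EnvyFree G M ∧ ∀ r h, (r, h) ∈ G.E → M r ≠ some h →
    ¬ (M r = none ∧ IsMatching G (Function.update M r (some h)) ∧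
        EnvyFree G (Function.update M r (some h)))

/-- `r'` is a candidate threshold resident for `h` w.r.t. `M1`: a neighbor of `h`
that is matched in `M1` and prefers `h` over its `M1`-partner. -/
def ThresholdCand (G : HRLQ R H) (M1 : R → Option H) (h : H) (r' : R) : Prop :=
  (r', h) ∈ G.E ∧ ∃ h', M1 r' = some h' ∧ G.rp r' h h'

/-- `rho` is the threshold resident of `h` w.r.t. `M1` (`none` encodes the dummy
resident used when no candidate exists): the candidate most preferred by `h`. -/
def IsThreshold (G : HRLQ R H) (M1 : R → Option H) (h : H) : Option R → Prop
  | none => ∀ r', ¬ ThresholdCand G M1 h r'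
  | some rh => ThresholdCand G M1 h rh ∧
      ∀ r', ThresholdCand G M1 h r' → r' ≠ rh → G.hp h rh r'

/-- `h` prefers `r` over the threshold resident `rho` (`none` = dummy resident,
less preferred by `h` than any neighbor). -/
def PrefThreshold (G : HRLQ R H) (h : H) : Option R → R → Prop
  | none, _ => True
  | some rh, r => G.hp h r rh

/-- The edge set `E'` of the reduced instance `G'` built from `M1` and the threshold
residents `rho`: edges `(r,h) ∈ E` with `r` unmatched in `M1` (i.e. `r ∈ R'`),
`h` under-subscribed (i.e. `h ∈ H'`), and `h` preferring `r` over its threshold resident. -/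
noncomputable def Ered (G : HRLQ R H) (M1 : R → Option H) (rho : H → Option R) :
    Finset (R × H) :=
  G.E.filter fun p =>
    M1 p.1 = none ∧ (assigned M1 p.2).card < G.uq p.2 ∧
      PrefThreshold G p.2 (rho p.2) p.1

/-- The upper quotas of the reduced instance `G'`. -/
def qred (G : HRLQ R H) : H → ℕ := fun h => G.uq h - G.lq h

/-- The union `M1 ∪ M2` of two matchings (with disjoint sets of matched residents). -/
def munion (M1 M2 : R → Option H) : R → Option H := fun r =>
  match M1 r with
  | some h => some h
  | none => M2 r

/-- The vote of resident `r` comparing assignment `a` (in `M`) with `b` (in `M'`):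
`1` if `r` prefers `a`, `-1` if `r` prefers `b`, `0` otherwise; being unmatched is
less preferred than being matched to any neighbor. -/
noncomputable def rvote (G : HRLQ R H) (r : R) (a b : Option H) : ℤ :=
  if a = b then 0
  else
    match a, b with
    | none, _ => -1
    | _, none => 1
    | some h, some h' => if G.rp r h h' then 1 else if G.rp r h' h then -1 else 0

/-- `P` encodes a legal correspondence `corr_h` for hospital `h` comparing `M` with `M'`:
a pairing of `M(h) \ M'(h)` with `M'(h) \ M(h)` (unpaired residents being paired with
distinct dummy residents after padding both sides to size `q⁺(h)`). -/
def IsCorr (G : HRLQ R H) (M M' : R → Option H) (h : H) (P : Finset (R × R)) : Prop :=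
  (∀ p ∈ P, p.1 ∈ assigned M h \ assigned M' h ∧ p.2 ∈ assigned M' h \ assigned M h) ∧
  (∀ p ∈ P, ∀ q ∈ P, (p.1 = q.1 ∨ p.2 = q.2) → p = q) ∧
  (assigned M h \ assigned M' h).card + (assigned M' h \ assigned M h).card - P.card
    ≤ G.uq h

/-- The total vote of hospital `h` comparing `M` with `M'` under the correspondence `P`
(positive contributions favor `M`): paired residents are compared by `h`'s preference;
a resident of `M(h) \ M'(h)` paired with a dummy contributes `+1`; a dummy paired with a
resident of `M'(h) \ M(h)` contributes `-1`; dummy-dummy pairs contribute `0`. -/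
noncomputable def hvote (G : HRLQ R H) (M M' : R → Option H) (h : H)
    (P : Finset (R × R)) : ℤ :=
  (∑ p ∈ P, if G.hp h p.1 p.2 then (1 : ℤ) else -1)
    + (((assigned M h \ assigned M' h).card - P.card : ℕ) : ℤ)
    - (((assigned M' h \ assigned M h).card - P.card : ℕ) : ℤ)

/-- The total vote of all residents and hospitals comparing `M` with `M'` under the
correspondences `P`; positive values favor `M`, negative values favor `M'`. -/
noncomputable def totalVote (G : HRLQ R H) (M M' : R → Option H)
    (P : H → Finset (R × R)) : ℤ :=
  (∑ r, rvote G r (M r) (M' r)) + ∑ h, hvote G M M' h (P h)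

/-- `M'` is more popular than `M` with respect to the chosen correspondences `P`. -/
def MorePopular (G : HRLQ R H) (M' M : R → Option H) (P : H → Finset (R × R)) : Prop :=
  totalVote G M M' P < 0

/-- `M` is a feasible matching popular amongst the set of feasible matchings: no feasible
matching `M'` is more popular than `M` under any choice of correspondences. -/
def PopularAmongFeasible (G : HRLQ R H) (M : R → Option H) : Prop :=
  Feasible G M ∧ ∀ M' P, Feasible G M' → (∀ h, IsCorr G M M' h (P h)) →
    ¬ MorePopular G M' M P

/-- `M` is a popular matching: no matching `M'` is more popular than `M` under any
choice of correspondences. -/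
def Popular (G : HRLQ R H) (M : R → Option H) : Prop :=
  IsMatching G M ∧ ∀ M' P, IsMatching G M' → (∀ h, IsCorr G M M' h (P h)) →
    ¬ MorePopular G M' M P

/-- The size of a matching: the number of matched residents. -/
noncomputable def msize (M : R → Option H) : ℕ :=
  (Finset.univ.filter fun r => M r ≠ none).card

/-- Resident `r` is matched in `M` to its rank-1 (most preferred) hospital. -/
def Rank1 (G : HRLQ R H) (M : R → Option H) (r : R) : Prop :=
  ∃ h, M r = some h ∧ ∀ h', (r, h') ∈ G.E → h' ≠ h → G.rp r h h'

/-- The number of residents matched to their rank-1 hospital in `M`. -/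
noncomputable def rank1Count (G : HRLQ R H) (M : R → Option H) : ℕ :=
  (Finset.univ.filter fun r => Rank1 G M r).card

/-- The number of residents who prefer their assignment in `M` over that in `M'`. -/
noncomputable def prefCount (G : HRLQ R H) (M M' : R → Option H) : ℕ :=
  (Finset.univ.filter fun r => rvote G r (M r) (M' r) = 1).card

end HRLQ

/-!
Quotas are respected because `M1` fills exactly `q⁻(h)` seats and `M2` at most `q⁺(h) - q⁻(h)`.
Suppose `r` envies `r'` at `h`. If `r'` got `h` in `M1`, then `(r, h)` blocks `M1` in `G1`.
If `r'` got `h` in `M2`, then `h` prefers `r` to `r'`, hence to the threshold resident `r_h`: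
if `r` is unmatched in `M1` this puts `(r, h)` in `G'`, where it blocks `M2`; if `r` is matched
in `M1`, then `r` is itself a threshold candidate of `h` ranked above `r_h`, which is absurd.
-/

namespace HRLQ

variable {R H : Type}

theorem munion_eq_some_iff {M1 M2 : R → Option H} {r : R} {h : H} :
    munion M1 M2 r = some h ↔ M1 r = some h ∨ (M1 r = none ∧ M2 r = some h) := by
  unfold munion
  cases M1 r <;> simp

theorem munion_of_eq_none {M1 M2 : R → Option H} {r : R} (hr : M1 r = none) :
    munion M1 M2 r = M2 r := by
  simp [munion, hr]

theorem WantsMore.ne_some {G : HRLQ R H} {M : R → Option H} {r : R} {h : H}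
    (hw : WantsMore G M r h) : M r ≠ some h :=
  fun hr => G.rp_irrefl r h (hw h hr)

theorem WantsMore.of_munion_left {G : HRLQ R H} {M1 M2 : R → Option H} {r : R} {h : H}
    (hw : WantsMore G (munion M1 M2) r h) : WantsMore G M1 r h :=
  fun h' hr => hw h' (munion_eq_some_iff.2 (Or.inl hr))

theorem WantsMore.of_munion_right {G : HRLQ R H} {M1 M2 : R → Option H} {r : R} {h : H}
    (hw : WantsMore G (munion M1 M2) r h) (hr : M1 r = none) : WantsMore G M2 r h := by
  rwa [WantsMore, munion_of_eq_none hr] at hw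

theorem PrefThreshold.of_hp {G : HRLQ R H} {h : H} {rho : Option R} {r r' : R}
    (hpref : G.hp h r r') (hr' : PrefThreshold G h rho r') : PrefThreshold G h rho r := by
  cases rho with
  | none => trivial
  | some rh => exact G.hp_trans h r r' rh hpref hr'

theorem IsThreshold.not_prefThreshold {G : HRLQ R H} {M1 : R → Option H} {h : H}
    {rho : Option R} {r : R} (hrho : IsThreshold G M1 h rho) (hr : ThresholdCand G M1 h r) :
    ¬ PrefThreshold G h rho r := by
  cases rho with
  | none => exact fun _ => hrho r hr
  | some rh =>
    intro hr_rh
    rcases eq_or_ne r rh with rfl | hne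
    · exact G.hp_irrefl h r hr_rh
    · exact G.hp_irrefl h r (G.hp_trans h r rh r hr_rh (hrho.2 r hr hne))

variable [Fintype R] [DecidableEq H]

@[simp]
theorem mem_assigned {M : R → Option H} {h : H} {r : R} :
    r ∈ assigned M h ↔ M r = some h := by
  simp [assigned]

theorem mem_Ered {G : HRLQ R H} {M1 : R → Option H} {rho : H → Option R} {r : R} {h : H} :
    (r, h) ∈ Ered G M1 rho ↔ (r, h) ∈ G.E ∧ M1 r = none ∧
      (assigned M1 h).card < G.uq h ∧ PrefThreshold G h (rho h) r := by
  simp [Ered]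

theorem Ered_subset (G : HRLQ R H) (M1 : R → Option H) (rho : H → Option R) :
    Ered G M1 rho ⊆ G.E :=
  Finset.filter_subset _ _

theorem assigned_munion_subset (M1 M2 : R → Option H) (h : H) :
    assigned (munion M1 M2) h ⊆ assigned M1 h ∪ assigned M2 h := by
  intro r hr
  simp only [mem_assigned, Finset.mem_union, munion_eq_some_iff] at hr ⊢
  tauto

theorem IsMatchingIn.mono {E E' : Finset (R × H)} {q q' : H → ℕ} {M : R → Option H}
    (hM : IsMatchingIn E q M) (hE : E ⊆ E') (hq : q ≤ q') : IsMatchingIn E' q' M :=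
  ⟨fun r h hr => hE (hM.1 r h hr), fun h => (hM.2 h).trans (hq h)⟩

theorem IsMatchingIn.munion {E : Finset (R × H)} {q₁ q₂ : H → ℕ} {M1 M2 : R → Option H}
    (h₁ : IsMatchingIn E q₁ M1) (h₂ : IsMatchingIn E q₂ M2) :
    IsMatchingIn E (q₁ + q₂) (munion M1 M2) := by
  refine ⟨fun r h hr => ?_, fun h => ?_⟩
  · rcases munion_eq_some_iff.1 hr with hr | ⟨-, hr⟩
    exacts [h₁.1 r h hr, h₂.1 r h hr]
  · calc (assigned (HRLQ.munion M1 M2) h).card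
        ≤ (assigned M1 h ∪ assigned M2 h).card :=
          Finset.card_le_card (assigned_munion_subset M1 M2 h)
      _ ≤ (assigned M1 h).card + (assigned M2 h).card := Finset.card_union_le _ _
      _ ≤ q₁ h + q₂ h := add_le_add (h₁.2 h) (h₂.2 h)

theorem blocksIn_of_envy {G : HRLQ R H} {E : Finset (R × H)} {q : H → ℕ}
    {M : R → Option H} {r r' : R} {h : H} (hE : (r, h) ∈ E) (hw : WantsMore G M r h)
    (hr' : M r' = some h) (hpref : G.hp h r r') : BlocksIn G E q M r h :=
  ⟨hE, hw.ne_some, hw, Or.inr ⟨r', mem_assigned.2 hr', hpref⟩⟩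

theorem envyFree_munion {G : HRLQ R H} {M1 M2 : R → Option H} {rho : H → Option R}
    (hM1stab : ∀ r h, ¬ BlocksIn G G.E G.lq M1 r h)
    (hrho : ∀ h, (assigned M1 h).card < G.uq h → IsThreshold G M1 h (rho h))
    (hM2 : ∀ r h, M2 r = some h → (r, h) ∈ Ered G M1 rho)
    (hM2stab : ∀ r h, ¬ BlocksIn G (Ered G M1 rho) (qred G) M2 r h) :
    EnvyFree G (munion M1 M2) := by
  rintro r r' ⟨h, hr'h, hE, hpref, hw⟩
  rcases munion_eq_some_iff.1 hr'h with hr'M1 | ⟨-, hr'M2⟩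
  · exact hM1stab r h (blocksIn_of_envy hE hw.of_munion_left hr'M1 hpref)
  obtain ⟨-, -, hcard, hr'thr⟩ := mem_Ered.1 (hM2 r' h hr'M2)
  have hr_thr : PrefThreshold G h (rho h) r := hr'thr.of_hp hpref
  cases hr : M1 r with
  | some h₀ =>
    have hcand : ThresholdCand G M1 h r := ⟨hE, h₀, hr, hw.of_munion_left h₀ hr⟩
    exact (hrho h hcard).not_prefThreshold hcand hr_thr
  | none =>
    exact hM2stab r h (blocksIn_of_envy (mem_Ered.2 ⟨hE, hr, hcard, hr_thr⟩)
      (hw.of_munion_right hr) hr'M2 hpref)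

end HRLQ

theorem statement2_general {R H : Type} [Fintype R] [DecidableEq H]
    (G : HRLQ R H) (M1 M2 : R → Option H) (rho : H → Option R)
    (hM1 : HRLQ.IsMatching G M1)
    (hM1stab : ∀ r h, ¬ HRLQ.BlocksIn G G.E G.lq M1 r h)
    (hM1full : ∀ h, (HRLQ.assigned M1 h).card = G.lq h)
    (hrho : ∀ h, (HRLQ.assigned M1 h).card < G.uq h → HRLQ.IsThreshold G M1 h (rho h))
    (hM2 : HRLQ.IsMatchingIn (HRLQ.Ered G M1 rho) (HRLQ.qred G) M2)
    (hM2stab : ∀ r h, ¬ HRLQ.BlocksIn G (HRLQ.Ered G M1 rho) (HRLQ.qred G) M2 r h) :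
    HRLQ.IsMatching G (HRLQ.munion M1 M2) ∧ HRLQ.EnvyFree G (HRLQ.munion M1 M2) := by
  have hM1lq : HRLQ.IsMatchingIn G.E G.lq M1 := ⟨hM1.1, fun h => (hM1full h).le⟩
  have hM2E : HRLQ.IsMatchingIn G.E (HRLQ.qred G) M2 :=
    hM2.mono (HRLQ.Ered_subset G M1 rho) le_rfl
  refine ⟨(hM1lq.munion hM2E).mono subset_rfl fun h => ?_,
    HRLQ.envyFree_munion hM1stab hrho hM2.1 hM2stab⟩
  simp only [Pi.add_apply, HRLQ.qred, Nat.add_sub_cancel' (G.lq_le_uq h), le_rfl]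

/-- If `M1` is a matching of `G` that is stable in `G1` and fills every
lower quota exactly, and `M2` is a stable matching of the reduced instance `G'`, then
`M = M1 ∪ M2` is an envy-free matching of `G`. -/
theorem statement2 {R H : Type} [Fintype R] [Fintype H] [DecidableEq R] [DecidableEq H]
    (G : HRLQ R H) (M1 M2 : R → Option H) (rho : H → Option R)
    (hM1 : HRLQ.IsMatching G M1)
    (hM1stab : ∀ r h, ¬ HRLQ.BlocksIn G G.E G.lq M1 r h)
    (hM1full : ∀ h, (HRLQ.assigned M1 h).card = G.lq h)
    (hrho : ∀ h, (HRLQ.assigned M1 h).card < G.uq h → HRLQ.IsThreshold G M1 h (rho h))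
    (hM2 : HRLQ.IsMatchingIn (HRLQ.Ered G M1 rho) (HRLQ.qred G) M2)
    (hM2stab : ∀ r h, ¬ HRLQ.BlocksIn G (HRLQ.Ered G M1 rho) (HRLQ.qred G) M2 r h) :
    HRLQ.IsMatching G (HRLQ.munion M1 M2) ∧ HRLQ.EnvyFree G (HRLQ.munion M1 M2) :=
  statement2_general G M1 M2 rho hM1 hM1stab hM1full hrho hM2 hM2stab
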